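/- Let 0 < Lint < Lext and 0 < b < Lext be real numbers, and set Φ(β) := Lext + b·cos β. Let H : ℝ → ℝ and F : ℝ × ℝ → ℝ be twice continuously differentiable on an open set containing (Lint, Lext] and (Lint, Lext] × ℝ respectively, with H > 0 and F > 0 there. Suppose F(Lext, β) = Φ(β)² for all β, H(Lext) = 1, and ∂ℓF(Lext, β) = ∂ℓ²F(Lext, β) = 0 for all β. Then there exists δ > 0 such that Z_0(ℓ,β) < 0 for all (ℓ,β) ∈ (Lext−δ, Lext) × (π−δ, π+δ); that is, the weak energy condition is violated in an open set sufficiently close to ℓ = Lext and β = π. -/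

import Mathlib

open Real Filter Set
open scoped Topology

/-- First partial derivative of `F` with respect to its first argument `ℓ`. -/
noncomputable def pdl (F : ℝ × ℝ → ℝ) (l β : ℝ) : ℝ := deriv (fun x => F (x, β)) l

/-- Second partial derivative of `F` with respect to its first argument `ℓ`. -/
noncomputable def pdll (F : ℝ × ℝ → ℝ) (l β : ℝ) : ℝ := deriv (fun x => pdl F x β) l

/-- First partial derivative of `F` with respect to its second argument `β`. -/
noncomputable def pdb (F : ℝ × ℝ → ℝ) (l β : ℝ) : ℝ := deriv (fun y => F (l, y)) β

/-- Second partial derivative of `F` with respect to its second argument `β`. -/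
noncomputable def pdbb (F : ℝ × ℝ → ℝ) (l β : ℝ) : ℝ := deriv (fun y => pdb F l y) β

/-- The scalar `Z_ϑ = G_{ab} (A_ϑ)^a (A_ϑ)^b` for the metric
`ds² = −H dτ² + dℓ² + F dα² + b² dβ²` and `A_ϑ = H^{−1/2} ∂_τ + ϑ b^{−1} ∂_β`. -/
noncomputable def Zscalar (b : ℝ) (H : ℝ → ℝ) (F : ℝ × ℝ → ℝ) (ϑ l β : ℝ) : ℝ :=
  (1 / (4 * b ^ 2)) * ((pdb F l β / F (l, β)) ^ 2 - 2 * pdbb F l β / F (l, β))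
  + ((1 - ϑ ^ 2) / 4) * ((pdl F l β / F (l, β)) ^ 2 - 2 * pdll F l β / F (l, β))
  + (ϑ ^ 2 / 4) * (2 * deriv (deriv H) l / H l - (deriv H l / H l) ^ 2
      + (deriv H l / H l) * (pdl F l β / F (l, β)))

/-!
At `ℓ = Lext` the `ℓ`-derivatives of `F` vanish and `ϑ = 0` removes every `H`-term, so
`Z₀(Lext, β) = (F_β² − 2 F F_ββ) / (4 b² F²)` with `F = Φ²`. At `β = π` we have `Φ_β = 0`,
`Φ = Lext − b` and `Φ_ββ = b`, giving `Z₀(Lext, π) = −1 / (b (Lext − b)) < 0`. Since `F` is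
`C²` near `(Lext, π)` and does not vanish there, `Z₀` is continuous at that point, so it stays
negative on a box around it.
-/

section PartialDerivatives

variable {F : ℝ × ℝ → ℝ} {V : Set (ℝ × ℝ)} {l β : ℝ}

lemma pdl_eq_fderiv (hF : DifferentiableAt ℝ F (l, β)) :
    pdl F l β = fderiv ℝ F (l, β) (1, 0) :=
  (hF.hasFDerivAt.comp_hasDerivAt l ((hasDerivAt_id l).prodMk (hasDerivAt_const l β))).deriv

lemma pdb_eq_fderiv (hF : DifferentiableAt ℝ F (l, β)) :
    pdb F l β = fderiv ℝ F (l, β) (0, 1) :=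
  (hF.hasFDerivAt.comp_hasDerivAt β ((hasDerivAt_const β l).prodMk (hasDerivAt_id β))).deriv

lemma ContDiffOn.contDiffOn_fderiv_apply {m n : WithTop ℕ∞} (hF : ContDiffOn ℝ n F V)
    (hV : IsOpen V) (hmn : m + 1 ≤ n) (v : ℝ × ℝ) :
    ContDiffOn ℝ m (fun p => fderiv ℝ F p v) V :=
  (hF.fderiv_of_isOpen hV hmn).clm_apply contDiffOn_const

lemma ContDiffOn.differentiableAt_of_isOpen {n : WithTop ℕ∞} (hF : ContDiffOn ℝ n F V)
    (hV : IsOpen V) (hn : n ≠ 0) {p : ℝ × ℝ} (hp : p ∈ V) : DifferentiableAt ℝ F p :=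
  (hF.contDiffAt (hV.mem_nhds hp)).differentiableAt hn

lemma pdll_eq_fderiv (hF : ContDiffOn ℝ 2 F V) (hV : IsOpen V) (h : (l, β) ∈ V) :
    pdll F l β = fderiv ℝ (fun p => fderiv ℝ F p (1, 0)) (l, β) (1, 0) := by
  have hslice : ∀ᶠ x in 𝓝 l, (x, β) ∈ V :=
    (hV.preimage (continuous_id.prodMk continuous_const)).mem_nhds h
  have heq : (fun x => pdl F x β) =ᶠ[𝓝 l] fun x => fderiv ℝ F (x, β) (1, 0) :=
    hslice.mono fun x hx => pdl_eq_fderiv (hF.differentiableAt_of_isOpen hV two_ne_zero hx)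
  rw [pdll, heq.deriv_eq]
  exact pdl_eq_fderiv
    ((hF.contDiffOn_fderiv_apply hV le_rfl (1, 0)).differentiableAt_of_isOpen hV one_ne_zero h)

lemma pdbb_eq_fderiv (hF : ContDiffOn ℝ 2 F V) (hV : IsOpen V) (h : (l, β) ∈ V) :
    pdbb F l β = fderiv ℝ (fun p => fderiv ℝ F p (0, 1)) (l, β) (0, 1) := by
  have hslice : ∀ᶠ y in 𝓝 β, (l, y) ∈ V :=
    (hV.preimage (continuous_const.prodMk continuous_id)).mem_nhds h
  have heq : (fun y => pdb F l y) =ᶠ[𝓝 β] fun y => fderiv ℝ F (l, y) (0, 1) :=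
    hslice.mono fun y hy => pdb_eq_fderiv (hF.differentiableAt_of_isOpen hV two_ne_zero hy)
  rw [pdbb, heq.deriv_eq]
  exact pdb_eq_fderiv
    ((hF.contDiffOn_fderiv_apply hV le_rfl (0, 1)).differentiableAt_of_isOpen hV one_ne_zero h)

lemma ContDiffOn.continuousOn_pdl (hF : ContDiffOn ℝ 2 F V) (hV : IsOpen V) :
    ContinuousOn (fun p : ℝ × ℝ => pdl F p.1 p.2) V :=
  (hF.contDiffOn_fderiv_apply (m := 1) hV (by norm_num) (1, 0)).continuousOn.congr fun _ hp =>
    pdl_eq_fderiv (hF.differentiableAt_of_isOpen hV two_ne_zero hp)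

lemma ContDiffOn.continuousOn_pdb (hF : ContDiffOn ℝ 2 F V) (hV : IsOpen V) :
    ContinuousOn (fun p : ℝ × ℝ => pdb F p.1 p.2) V :=
  (hF.contDiffOn_fderiv_apply (m := 1) hV (by norm_num) (0, 1)).continuousOn.congr fun _ hp =>
    pdb_eq_fderiv (hF.differentiableAt_of_isOpen hV two_ne_zero hp)

lemma ContDiffOn.continuousOn_pdll (hF : ContDiffOn ℝ 2 F V) (hV : IsOpen V) :
    ContinuousOn (fun p : ℝ × ℝ => pdll F p.1 p.2) V :=
  (((hF.contDiffOn_fderiv_apply (m := 1) hV le_rfl (1, 0)).contDiffOn_fderiv_apply (m := 0) hV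
    (by norm_num) (1, 0)).continuousOn).congr fun _ hp => pdll_eq_fderiv hF hV hp

lemma ContDiffOn.continuousOn_pdbb (hF : ContDiffOn ℝ 2 F V) (hV : IsOpen V) :
    ContinuousOn (fun p : ℝ × ℝ => pdbb F p.1 p.2) V :=
  (((hF.contDiffOn_fderiv_apply (m := 1) hV le_rfl (0, 1)).contDiffOn_fderiv_apply (m := 0) hV
    (by norm_num) (0, 1)).continuousOn).congr fun _ hp => pdbb_eq_fderiv hF hV hp

end PartialDerivatives

section EnergyDensity

variable {b : ℝ} {H : ℝ → ℝ} {F : ℝ × ℝ → ℝ}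

lemma Zscalar_zero (l β : ℝ) :
    Zscalar b H F 0 l β =
      (1 / (4 * b ^ 2)) * ((pdb F l β / F (l, β)) ^ 2 - 2 * pdbb F l β / F (l, β))
      + (1 / 4) * ((pdl F l β / F (l, β)) ^ 2 - 2 * pdll F l β / F (l, β)) := by
  simp [Zscalar]

lemma continuousAt_Zscalar_zero {V : Set (ℝ × ℝ)} (hF : ContDiffOn ℝ 2 F V) (hV : IsOpen V)
    {p : ℝ × ℝ} (hp : p ∈ V) (hFp : F p ≠ 0) :
    ContinuousAt (fun q : ℝ × ℝ => Zscalar b H F 0 q.1 q.2) p := by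
  have hVp : V ∈ 𝓝 p := hV.mem_nhds hp
  have hFc : ContinuousAt F p := hF.continuousOn.continuousAt hVp
  have hl := (hF.continuousOn_pdl hV).continuousAt hVp
  have hb := (hF.continuousOn_pdb hV).continuousAt hVp
  have hll := (hF.continuousOn_pdll hV).continuousAt hVp
  have hbb := (hF.continuousOn_pdbb hV).continuousAt hVp
  simp only [Zscalar_zero]
  fun_prop (disch := assumption)

lemma pdb_eq_of_sq_cos {l : ℝ} (hFl : ∀ β, F (l, β) = (l + b * cos β) ^ 2) :
    pdb F l = fun β => -(2 * b * sin β * (l + b * cos β)) := by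
  funext β
  have hΦ : HasDerivAt (fun y => l + b * cos y) (-(b * sin β)) β := by
    simpa using ((hasDerivAt_cos β).const_mul b).const_add l
  rw [pdb, funext hFl]
  exact (hΦ.pow 2).deriv.trans (by ring)

lemma pdbb_pi_of_sq_cos {l : ℝ} (hFl : ∀ β, F (l, β) = (l + b * cos β) ^ 2) :
    pdbb F l π = 2 * b * (l - b) := by
  have hΦ : HasDerivAt (fun y => l + b * cos y) (-(b * sin π)) π := by
    simpa using ((hasDerivAt_cos π).const_mul b).const_add l
  have h := (((hasDerivAt_sin π).const_mul (2 * b)).fun_mul hΦ).fun_neg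
  simp only [pdbb, pdb_eq_of_sq_cos hFl]
  rw [h.deriv, sin_pi, cos_pi]
  ring

lemma Zscalar_zero_pi_of_sq_cos {l : ℝ} (hb : b ≠ 0) (hbl : l - b ≠ 0)
    (hFl : ∀ β, F (l, β) = (l + b * cos β) ^ 2) (hdl : pdl F l π = 0)
    (hdll : pdll F l π = 0) :
    Zscalar b H F 0 l π = -(1 / (b * (l - b))) := by
  have hpdb : pdb F l π = 0 := by simp [pdb_eq_of_sq_cos hFl]
  have hFpi : F (l, π) = (l - b) ^ 2 := by rw [hFl, cos_pi]; ring
  rw [Zscalar_zero, hdl, hdll, hpdb, pdbb_pi_of_sq_cos hFl, hFpi]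
  field_simp
  ring

end EnergyDensity

theorem WEC_violated_near_external_boundary_general
    (Lint Lext b : ℝ) (hLL : Lint < Lext) (hb : 0 < b) (hbL : b < Lext)
    (H : ℝ → ℝ) (F : ℝ × ℝ → ℝ)
    (V : Set (ℝ × ℝ)) (hVopen : IsOpen V)
    (hVsub : Set.Ioc Lint Lext ×ˢ (Set.univ : Set ℝ) ⊆ V)
    (hF : ContDiffOn ℝ 2 F V)
    (hFext : ∀ β : ℝ, F (Lext, β) = (Lext + b * Real.cos β) ^ 2)
    (hdl : ∀ β : ℝ, pdl F Lext β = 0) (hdll : ∀ β : ℝ, pdll F Lext β = 0) :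
    ∃ δ > 0, ∀ l β : ℝ, l ∈ Set.Ioo (Lext - δ) Lext → β ∈ Set.Ioo (Real.pi - δ) (Real.pi + δ) →
      Zscalar b H F 0 l β < 0 := by
  have hLb : 0 < Lext - b := sub_pos.mpr hbL
  have hmem : (Lext, π) ∈ V := hVsub ⟨⟨hLL, le_rfl⟩, mem_univ π⟩
  have hFpi : F (Lext, π) ≠ 0 := by rw [hFext, cos_pi]; nlinarith
  have hZpi : Zscalar b H F 0 Lext π < 0 := by
    rw [Zscalar_zero_pi_of_sq_cos hb.ne' hLb.ne' hFext (hdl π) (hdll π), neg_lt_zero]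
    positivity
  obtain ⟨δ, hδ, hball⟩ := Metric.eventually_nhds_iff_ball.1
    ((continuousAt_Zscalar_zero hF hVopen hmem hFpi).eventually (gt_mem_nhds hZpi))
  refine ⟨δ, hδ, fun l β hl hβ => hball (l, β) ?_⟩
  rw [← ball_prod_same, Real.ball_eq_Ioo, Real.ball_eq_Ioo]
  exact ⟨Ioo_subset_Ioo_right (by linarith) hl, hβ⟩

/-- Part (i) of Theorem 1 of the paper: under the stated hypotheses, `Z_0 < 0` (violation of the
weak energy condition) in an open set sufficiently close to `ℓ = Lext` and `β = π`. -/
theorem WEC_violated_near_external_boundary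
    (Lint Lext b : ℝ) (hLint : 0 < Lint) (hLL : Lint < Lext) (hb : 0 < b) (hbL : b < Lext)
    (H : ℝ → ℝ) (F : ℝ × ℝ → ℝ)
    (U : Set ℝ) (hUopen : IsOpen U) (hUsub : Set.Ioc Lint Lext ⊆ U)
    (V : Set (ℝ × ℝ)) (hVopen : IsOpen V)
    (hVsub : Set.Ioc Lint Lext ×ˢ (Set.univ : Set ℝ) ⊆ V)
    (hH : ContDiffOn ℝ 2 H U) (hF : ContDiffOn ℝ 2 F V)
    (hHpos : ∀ x ∈ U, 0 < H x) (hFpos : ∀ p ∈ V, 0 < F p)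
    (hFext : ∀ β : ℝ, F (Lext, β) = (Lext + b * Real.cos β) ^ 2)
    (hHext : H Lext = 1)
    (hdl : ∀ β : ℝ, pdl F Lext β = 0) (hdll : ∀ β : ℝ, pdll F Lext β = 0) :
    ∃ δ > 0, ∀ l β : ℝ, l ∈ Set.Ioo (Lext - δ) Lext → β ∈ Set.Ioo (Real.pi - δ) (Real.pi + δ) →
      Zscalar b H F 0 l β < 0 :=
  WEC_violated_near_external_boundary_general Lint Lext b hLL hb hbL H F V hVopen hVsub hF hFext hdl
    hdll
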